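/- For every f ∈ L, the risk measure ρ admits the kernel representation ρ(f) = sup_{κ ∈ ker(X,Y)} ∫_X ( ∫_Y f(y) κ(x,dy) − C(x,κ(x)) ) μ(dx), where the integrand is evaluated with the convention ∞ − ∞ = −∞. -/

import Mathlib

open MeasureTheory ProbabilityTheory
open scoped ENNReal

noncomputable section

/-- The positive part of an extended real number, as an element of `ℝ≥0∞`. -/
def EReal.posPart (x : EReal) : ℝ≥0∞ := (max x 0).abs

/-- The signed integral of an `EReal`-valued function, with the convention `∞ - ∞ = -∞`
(note that in `EReal` one has `⊤ - ⊤ = ⊥`). -/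
def sint {α : Type*} [MeasurableSpace α] (μ : Measure α) (f : α → EReal) : EReal :=
  ((∫⁻ a, (f a).posPart ∂μ : ℝ≥0∞) : EReal) - ((∫⁻ a, (-(f a)).posPart ∂μ : ℝ≥0∞) : EReal)

/-- The weak optimal transport cost `inf_{κ ∈ ker(μ,ν)} ∫ C(x, κ(x)) μ(dx)`,
with the convention `inf ∅ = ∞`. -/
def wotCost {X Y : Type*} [MeasurableSpace X] [MeasurableSpace Y]
    (μ : Measure X) (C : X → Measure Y → ℝ≥0∞) (ν : Measure Y) : ℝ≥0∞ :=
  ⨅ (κ : Kernel X Y) (_ : IsMarkovKernel κ) (_ : μ.bind κ = ν), ∫⁻ x, C x (κ x) ∂μ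

/-- The risk measure with weak optimal transport penalty. -/
def rho {X Y : Type*} [MeasurableSpace X] [MeasurableSpace Y]
    (μ : Measure X) (C : X → Measure Y → ℝ≥0∞) (f : Y → EReal) : EReal :=
  ⨆ (ν : Measure Y) (_ : IsProbabilityMeasure ν), (sint ν f - (wotCost μ C ν : EReal))

/-- The `C`-transform `f^C(x) = sup_{ϑ ∈ P(Y)} ( ∫ f dϑ − C(x,ϑ) )`. -/
def Ctrans {X Y : Type*} [MeasurableSpace X] [MeasurableSpace Y]
    (C : X → Measure Y → ℝ≥0∞) (f : Y → EReal) (x : X) : EReal :=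
  ⨆ (ϑ : Measure Y) (_ : IsProbabilityMeasure ϑ), (sint ϑ f - (C x ϑ : EReal))

/-- Membership in the set `L`: `f` is Borel measurable, `∫ f d(μκ₀) > −∞` and
`∫ f^C dμ̄ < ∞` (here `ν₀` plays the role of `μκ₀`; note that the lower Lebesgue integral
used in `sint` is defined for arbitrary, not necessarily Borel measurable, functions, which
corresponds to integration of the universally measurable function `f^C` with respect to the
extension `μ̄` of `μ` to the universal σ-algebra). -/
def memL {X Y : Type*} [MeasurableSpace X] [MeasurableSpace Y]
    (μ : Measure X) (ν₀ : Measure Y) (C : X → Measure Y → ℝ≥0∞) (f : Y → EReal) : Prop :=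
  Measurable f ∧ ⊥ < sint ν₀ f ∧ sint μ (Ctrans C f) < ⊤

/-!
For `ν = μκ` the integral `∫ f dν` splits as `∫∫ f⁺ dκ dμ - ∫∫ f⁻ dκ dμ`, and a difference of
integrals is at most the integral of the difference; this gives `ρ(f) ≤ sup_κ …` term by term.

Conversely, fix `κ`. The positive part of `∫ f dκ(x) - C(x, κ(x))` is dominated by that of `f^C`,
which is integrable: `∫ f^C dμ < ∞`, and the negative part of `f^C` is controlled because
`f^C ≥ ∫ f dκ₀` a.e. and `∫ f d(μκ₀) > -∞`. Follow `κ` on the set `Gₙ` where all the quantities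
involved are at most `n`, and the cost-free kernel `κ₀` off `Gₙ`. The resulting competitors `μκₙ`
for `ρ(f)` lose at most `∫_{Gₙᶜ} ∫ f⁻ dκ₀ dμ → 0` against the objective of `κ` restricted to `Gₙ`,
which tends to the objective of `κ` by monotone convergence.
-/

open Filter Topology

namespace EReal

lemma posPart_eq_toENNReal (x : EReal) : x.posPart = x.toENNReal := by
  induction x using EReal.rec with
  | bot => simp [posPart]
  | top => rfl
  | coe r =>
    rw [posPart, real_coe_toENNReal]
    rcases le_total r 0 with h | h
    · rw [max_eq_right (EReal.coe_nonpos.2 h), abs_zero, ENNReal.ofReal_of_nonpos h]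
    · rw [max_eq_left (EReal.coe_nonneg.2 h), abs_def, abs_of_nonneg h]

lemma toENNReal_coe_sub_coe (a b : ℝ≥0∞) : ((a : EReal) - b).toENNReal = a - b := by
  rw [toENNReal_sub (coe_ennreal_nonneg b), toENNReal_coe, toENNReal_coe]

lemma toENNReal_neg_coe_sub_coe {b : ℝ≥0∞} (hb : b ≠ ⊤) (a : ℝ≥0∞) :
    (-((a : EReal) - b)).toENNReal = b - a := by
  rw [neg_sub (.inr (coe_ennreal_ne_bot b)) (.inr (coe_ennreal_eq_top_iff.not.2 hb)), add_comm,
    ← sub_eq_add_neg, toENNReal_coe_sub_coe]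

lemma coe_sub_coe_sub_coe (a b c : ℝ≥0∞) : (a : EReal) - b - c = a - ↑(b + c) := by
  rcases eq_or_ne b ⊤ with rfl | hb
  · simp
  rcases eq_or_ne c ⊤ with rfl | hc
  · simp
  rw [← coe_ennreal_toReal hb, ← coe_ennreal_toReal hc,
    ← coe_ennreal_toReal (ENNReal.add_ne_top.2 ⟨hb, hc⟩), ENNReal.toReal_add hb hc]
  rcases eq_or_ne a ⊤ with rfl | ha
  · rw [coe_ennreal_top, top_sub_coe, top_sub_coe, top_sub_coe]
  rw [← coe_ennreal_toReal ha]
  norm_cast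
  ring

lemma coe_ennreal_sub_coe_ennreal {a b : ℝ≥0∞} (ha : a ≠ ⊤) (hb : b ≠ ⊤) :
    (a : EReal) - b = ((a.toReal - b.toReal : ℝ) : EReal) := by
  rw [← coe_ennreal_toReal ha, ← coe_ennreal_toReal hb]
  rfl

lemma coe_sub_coe_eq_of_add_eq {a b c d : ℝ≥0∞} (hb : b ≠ ⊤) (hd : d ≠ ⊤)
    (h : a + d = c + b) : (a : EReal) - b = c - d := by
  rcases eq_or_ne a ⊤ with rfl | ha
  · have hc : c = ⊤ := by simpa [ENNReal.add_eq_top, hb] using h.symm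
    rw [hc, coe_ennreal_top, top_sub (coe_ennreal_eq_top_iff.not.2 hb),
      top_sub (coe_ennreal_eq_top_iff.not.2 hd)]
  have hc : c ≠ ⊤ := fun hc => by simp [hc, ha, hd] at h
  have := congrArg ENNReal.toReal h
  rw [ENNReal.toReal_add ha hd, ENNReal.toReal_add hc hb] at this
  rw [coe_ennreal_sub_coe_ennreal ha hb, coe_ennreal_sub_coe_ennreal hc hd]
  congr 1
  linarith

lemma continuous_coe_sub (a : ℝ) : Continuous fun x : EReal => (a : EReal) - x :=
  continuous_iff_continuousAt.2 fun x =>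
    ContinuousAt.comp (f := fun y : EReal => ((a : EReal), -y)) (x := x)
      (continuousAt_add (.inl (coe_ne_top a)) (.inl (coe_ne_bot a)))
      (continuous_const.prodMk continuous_neg).continuousAt

lemma sub_iInf_le_iSup_sub {ι : Sort*} (a : EReal) (s : ι → ℝ≥0∞) :
    a - ↑(⨅ i, s i) ≤ ⨆ i, (a - s i) := by
  induction a using EReal.rec with
  | bot => simp
  | top =>
    -- `t ↦ ⊤ - t` jumps at `t = ⊤` (where `⊤ - ⊤ = ⊥`), so continuity does not apply here.
    rcases eq_or_ne (⨅ i, s i) ⊤ with h | h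
    · simp [h]
    obtain ⟨i, hi⟩ := iInf_lt_iff.1 h.lt_top
    refine le_iSup_of_le i ?_
    rw [top_sub (coe_ennreal_eq_top_iff.not.2 hi.ne)]
    exact le_top
  | coe a =>
    refine (Antitone.map_iInf_of_continuousAt (f := fun t : ℝ≥0∞ => (a : EReal) - t)
      ((continuous_coe_sub a).comp continuous_coe_ennreal_ereal).continuousAt
      (fun x y hxy => sub_le_sub le_rfl (coe_ennreal_le_coe_ennreal_iff.2 hxy)) ?_).le
    simp

end EReal

section SignedIntegral

variable {α : Type*} [MeasurableSpace α] {μ : Measure α}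

lemma sint_eq_toENNReal (μ : Measure α) (f : α → EReal) :
    sint μ f = ↑(∫⁻ x, (f x).toENNReal ∂μ) - ↑(∫⁻ x, (-f x).toENNReal ∂μ) := by
  simp only [sint, EReal.posPart_eq_toENNReal]

lemma lintegral_toENNReal_neg_ne_top_of_bot_lt_sint {f : α → EReal} (h : ⊥ < sint μ f) :
    ∫⁻ x, (-f x).toENNReal ∂μ ≠ ⊤ := by
  intro h_top
  simp [sint_eq_toENNReal, h_top] at h

lemma lintegral_toENNReal_ne_top_of_sint_lt_top {f : α → EReal} (h : sint μ f < ⊤)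
    (h_neg : ∫⁻ x, (-f x).toENNReal ∂μ ≠ ⊤) : ∫⁻ x, (f x).toENNReal ∂μ ≠ ⊤ := by
  intro h_top
  rw [sint_eq_toENNReal, h_top, EReal.coe_ennreal_top,
    EReal.top_sub (EReal.coe_ennreal_eq_top_iff.not.2 h_neg)] at h
  exact h.ne rfl

lemma lintegral_add_lintegral_tsub {a b : α → ℝ≥0∞} (ha : AEMeasurable a μ)
    (hb : AEMeasurable b μ) :
    ∫⁻ x, a x - b x ∂μ + ∫⁻ x, b x ∂μ = ∫⁻ x, a x ∂μ + ∫⁻ x, b x - a x ∂μ := by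
  rw [← lintegral_add_right' _ hb, ← lintegral_add_right' a (g := fun x => b x - a x) (hb.sub ha)]
  simp only [tsub_add_eq_max, add_tsub_eq_max]

lemma lintegral_toENNReal_neg_coe_sub_coe {a b : α → ℝ≥0∞} (hb : ∀ᵐ x ∂μ, b x ≠ ⊤) :
    ∫⁻ x, (-((a x : EReal) - b x)).toENNReal ∂μ = ∫⁻ x, b x - a x ∂μ :=
  lintegral_congr_ae <| hb.mono fun _ hx => EReal.toENNReal_neg_coe_sub_coe hx _

lemma ae_ne_top_of_lintegral_toENNReal_neg_coe_sub_coe_ne_top {a b : α → ℝ≥0∞}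
    (ha : Measurable a) (hb : Measurable b)
    (h : ∫⁻ x, (-((a x : EReal) - b x)).toENNReal ∂μ ≠ ⊤) : ∀ᵐ x ∂μ, b x ≠ ⊤ := by
  refine (ae_lt_top' ?_ h).mono fun x hx hbx => ?_
  · exact (ha.coe_ereal_ennreal.sub hb.coe_ereal_ennreal).neg.ereal_toENNReal.aemeasurable
  · simp [hbx] at hx

lemma sint_coe_sub_coe {a b : α → ℝ≥0∞} (ha : AEMeasurable a μ) (hb : AEMeasurable b μ)
    (hb_fin : ∫⁻ x, b x ∂μ ≠ ⊤) :
    sint μ (fun x => (a x : EReal) - b x) = ↑(∫⁻ x, a x ∂μ) - ↑(∫⁻ x, b x ∂μ) := by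
  rw [sint_eq_toENNReal, lintegral_toENNReal_neg_coe_sub_coe
    ((ae_lt_top' hb hb_fin).mono fun _ => ne_of_lt)]
  simp only [EReal.toENNReal_coe_sub_coe]
  exact EReal.coe_sub_coe_eq_of_add_eq
    (ne_top_of_le_ne_top hb_fin (lintegral_mono fun x => tsub_le_self)) hb_fin
    (lintegral_add_lintegral_tsub ha hb)

lemma coe_lintegral_sub_le_sint {a b : α → ℝ≥0∞} (ha : AEMeasurable a μ)
    (hb : AEMeasurable b μ) :
    ↑(∫⁻ x, a x ∂μ) - ↑(∫⁻ x, b x ∂μ) ≤ sint μ (fun x => (a x : EReal) - b x) := by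
  rcases eq_or_ne (∫⁻ x, b x ∂μ) ⊤ with h | h
  · simp [h]
  · exact (sint_coe_sub_coe ha hb h).ge

lemma coe_toReal_sub_le_setLIntegral_sub {a b h : α → ℝ≥0∞} (ha : AEMeasurable a μ)
    (hb : AEMeasurable b μ) {s : Set α} (ha_fin : ∫⁻ x in s, a x ∂μ ≠ ⊤)
    (hb_fin : ∫⁻ x in s, b x ∂μ ≠ ⊤) (hba_fin : ∫⁻ x, b x - a x ∂μ ≠ ⊤)
    (h_fin : ∫⁻ x in sᶜ, h x ∂μ ≠ ⊤) :
    (((∫⁻ x in s, a x - b x ∂μ).toReal - (∫⁻ x, b x - a x ∂μ).toReal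
        - (∫⁻ x in sᶜ, h x ∂μ).toReal : ℝ) : EReal)
      ≤ ↑(∫⁻ x in s, a x ∂μ) - ↑(∫⁻ x in s, b x ∂μ + ∫⁻ x in sᶜ, h x ∂μ) := by
  have hsplit := congrArg ENNReal.toReal
    (lintegral_add_lintegral_tsub ha.restrict (hb.restrict (s := s)))
  have hba : (∫⁻ x in s, b x - a x ∂μ).toReal ≤ (∫⁻ x, b x - a x ∂μ).toReal :=
    ENNReal.toReal_mono hba_fin (setLIntegral_le_lintegral _ _)
  have hab_fin : ∫⁻ x in s, a x - b x ∂μ ≠ ⊤ :=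
    ne_top_of_le_ne_top ha_fin (lintegral_mono fun x => tsub_le_self)
  rw [ENNReal.toReal_add hab_fin hb_fin, ENNReal.toReal_add ha_fin (ne_top_of_le_ne_top hba_fin
    (setLIntegral_le_lintegral _ _))] at hsplit
  rw [EReal.coe_ennreal_sub_coe_ennreal ha_fin (ENNReal.add_ne_top.2 ⟨hb_fin, h_fin⟩),
    EReal.coe_le_coe_iff, ENNReal.toReal_add hb_fin h_fin]
  linarith

lemma tendsto_setLIntegral_of_monotone {G : ℕ → Set α} (hG_meas : ∀ n, MeasurableSet (G n))
    (hG_mono : Monotone G) (hG_ae : ∀ᵐ x ∂μ, x ∈ ⋃ n, G n) (g : α → ℝ≥0∞) :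
    Tendsto (fun n => ∫⁻ x in G n, g x ∂μ) atTop (𝓝 (∫⁻ x, g x ∂μ)) := by
  have := tendsto_measure_iUnion_atTop (μ := μ.withDensity g) hG_mono
  rw [withDensity_apply _ (MeasurableSet.iUnion hG_meas),
    Measure.restrict_eq_self_of_ae_mem hG_ae] at this
  exact this.congr fun n => withDensity_apply _ (hG_meas n)

lemma sint_coe_sub_coe_le_of_forall_measurableSet [IsFiniteMeasure μ] {a b h : α → ℝ≥0∞}
    (ha : Measurable a) (hb : Measurable b) (h_fin : ∫⁻ x, h x ∂μ ≠ ⊤)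
    (hab_fin : ∫⁻ x, a x - b x ∂μ ≠ ⊤) {r : EReal}
    (hr : ∀ s, MeasurableSet s →
      ↑(∫⁻ x in s, a x ∂μ) - ↑(∫⁻ x in s, b x ∂μ + ∫⁻ x in sᶜ, h x ∂μ) ≤ r) :
    sint μ (fun x => (a x : EReal) - b x) ≤ r := by
  rw [sint_eq_toENNReal]
  simp only [EReal.toENNReal_coe_sub_coe]
  rcases eq_or_ne (∫⁻ x, (-((a x : EReal) - b x)).toENNReal ∂μ) ⊤ with hq | hq
  · simp [hq]
  have hb_ne := ae_ne_top_of_lintegral_toENNReal_neg_coe_sub_coe_ne_top ha hb hq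
  rw [lintegral_toENNReal_neg_coe_sub_coe hb_ne] at hq ⊢
  have hab_ne : ∀ᵐ x ∂μ, a x + b x ≠ ⊤ := by
    filter_upwards [ae_lt_top (ha.sub hb) hab_fin, hb_ne] with x hab hb
    exact ENNReal.add_ne_top.2
      ⟨ne_top_of_le_ne_top (ENNReal.add_ne_top.2 ⟨hab.ne, hb⟩) le_tsub_add, hb⟩
  set G : ℕ → Set α := fun n => {x | a x + b x ≤ n}
  have hG_meas (n : ℕ) : MeasurableSet (G n) := (ha.add hb) measurableSet_Iic
  have hG_mono : Monotone G := fun m n hmn x (hx : a x + b x ≤ m) => hx.trans (Nat.cast_le.2 hmn)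
  have hG_ae : ∀ᵐ x ∂μ, x ∈ ⋃ n, G n := hab_ne.mono fun x hx =>
    Set.mem_iUnion.2 ((ENNReal.exists_nat_gt hx).imp fun _ hn => hn.le)
  have h_out : Tendsto (fun n => ∫⁻ x in (G n)ᶜ, h x ∂μ) atTop (𝓝 0) := by
    refine tendsto_setLIntegral_zero h_fin ?_
    have := tendsto_measure_iInter_atTop (μ := μ) (fun n => (hG_meas n).compl.nullMeasurableSet)
      (fun m n hmn => Set.compl_subset_compl.2 (hG_mono hmn)) ⟨0, measure_ne_top _ _⟩
    rwa [← Set.compl_iUnion, show μ (⋃ n, G n)ᶜ = 0 from hG_ae] at this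
  have h_in := tendsto_setLIntegral_of_monotone hG_meas hG_mono hG_ae fun x => a x - b x
  have h_lim := (((ENNReal.tendsto_toReal hab_fin).comp h_in).sub_const
    (∫⁻ x, b x - a x ∂μ).toReal).sub
    ((ENNReal.tendsto_toReal ENNReal.zero_ne_top).comp h_out)
  rw [ENNReal.toReal_zero, sub_zero] at h_lim
  rw [EReal.coe_ennreal_sub_coe_ennreal hab_fin hq]
  refine le_of_tendsto' ((continuous_coe_real_ereal.tendsto _).comp h_lim) fun n => ?_
  have hG_fin (g : α → ℝ≥0∞) (hg : ∀ x, g x ≤ a x + b x) : ∫⁻ x in G n, g x ∂μ ≠ ⊤ :=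
    ne_top_of_le_ne_top (by simpa using ENNReal.mul_ne_top (by simp) (measure_ne_top μ (G n)))
      (setLIntegral_mono' (hG_meas n) fun x hx => (hg x).trans hx)
  exact (coe_toReal_sub_le_setLIntegral_sub ha.aemeasurable hb.aemeasurable
    (hG_fin a fun _ => le_self_add) (hG_fin b fun _ => le_add_self) hq
    (ne_top_of_le_ne_top h_fin (setLIntegral_le_lintegral _ _))).trans (hr (G n) (hG_meas n))

end SignedIntegral

section RiskMeasure

variable {X Y : Type*} [MeasurableSpace X] [MeasurableSpace Y] {μ : Measure X}
  {C : X → Measure Y → ℝ≥0∞} {f : Y → EReal}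

lemma sint_bind (hf : Measurable f) (κ : Kernel X Y) :
    sint (μ.bind κ) f = ↑(∫⁻ x, ∫⁻ y, (f y).toENNReal ∂κ x ∂μ)
      - ↑(∫⁻ x, ∫⁻ y, (-f y).toENNReal ∂κ x ∂μ) := by
  rw [sint_eq_toENNReal, Measure.lintegral_bind κ.aemeasurable hf.ereal_toENNReal.aemeasurable,
    Measure.lintegral_bind (f := fun y => (-f y).toENNReal) κ.aemeasurable
      hf.neg.ereal_toENNReal.aemeasurable]

lemma measurable_lintegral_toENNReal_neg (hf : Measurable f) (κ : Kernel X Y) :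
    Measurable fun x => ∫⁻ y, (-f y).toENNReal ∂κ x :=
  (hf.neg.ereal_toENNReal : Measurable fun y => (-f y).toENNReal).lintegral_kernel

lemma sint_sub_coe (ν : Measure Y) (f : Y → EReal) (c : ℝ≥0∞) :
    sint ν f - c = ↑(∫⁻ y, (f y).toENNReal ∂ν) - ↑(∫⁻ y, (-f y).toENNReal ∂ν + c) := by
  rw [sint_eq_toENNReal, EReal.coe_sub_coe_sub_coe]

lemma sint_sub_le_Ctrans (ϑ : Measure Y) [IsProbabilityMeasure ϑ] (x : X) :
    sint ϑ f - C x ϑ ≤ Ctrans C f x :=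
  le_iSup₂ (f := fun ϑ (_ : IsProbabilityMeasure ϑ) => sint ϑ f - C x ϑ) ϑ ‹_›

lemma lintegral_lintegral_piecewise {s : Set X} [DecidablePred (· ∈ s)] (hs : MeasurableSet s)
    (κ η : Kernel X Y) (g : Y → ℝ≥0∞) :
    ∫⁻ x, ∫⁻ y, g y ∂Kernel.piecewise hs κ η x ∂μ
      = ∫⁻ x in s, ∫⁻ y, g y ∂κ x ∂μ + ∫⁻ x in sᶜ, ∫⁻ y, g y ∂η x ∂μ := by
  simp_rw [Kernel.lintegral_piecewise]
  exact lintegral_piecewise hs _ _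

lemma sint_bind_sub_le_rho [IsProbabilityMeasure μ] (κ : Kernel X Y) [IsMarkovKernel κ] :
    sint (μ.bind κ) f - ↑(∫⁻ x, C x (κ x) ∂μ) ≤ rho μ C f := by
  have hν : IsProbabilityMeasure (μ.bind κ) :=
    isProbabilityMeasure_bind κ.aemeasurable (ae_of_all _ fun x => inferInstance)
  have h_cost : wotCost μ C (μ.bind κ) ≤ ∫⁻ x, C x (κ x) ∂μ :=
    iInf₂_le_of_le κ ‹_› (iInf_le _ rfl)
  calc sint (μ.bind κ) f - ↑(∫⁻ x, C x (κ x) ∂μ)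
      ≤ sint (μ.bind κ) f - ↑(wotCost μ C (μ.bind κ)) :=
        EReal.sub_le_sub le_rfl (EReal.coe_ennreal_le_coe_ennreal_iff.2 h_cost)
    _ ≤ rho μ C f :=
        le_iSup₂ (f := fun ν (_ : IsProbabilityMeasure ν) => sint ν f - ↑(wotCost μ C ν))
          (μ.bind κ) hν

lemma rho_le_iSup_sint_kernel_sub_cost (hf : Measurable f)
    (hC : Measurable fun p : X × Measure Y => C p.1 p.2) :
    rho μ C f ≤ ⨆ (κ : Kernel X Y) (_ : IsMarkovKernel κ),
      sint μ (fun x => sint (κ x) f - (C x (κ x) : EReal)) := by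
  unfold rho wotCost
  refine iSup₂_le fun ν _ => (EReal.sub_iInf_le_iSup_sub _ _).trans <| iSup_le fun κ =>
    (EReal.sub_iInf_le_iSup_sub _ _).trans <| iSup_le fun hκ =>
    (EReal.sub_iInf_le_iSup_sub _ _).trans <| iSup_le fun hν => ?_
  subst hν
  refine le_iSup₂_of_le κ hκ ?_
  have hB := measurable_lintegral_toENNReal_neg hf κ
  have hc : Measurable fun x => C x (κ x) := hC.comp (measurable_id.prodMk κ.measurable)
  rw [sint_bind hf, EReal.coe_sub_coe_sub_coe, ← lintegral_add_left hB]
  simp only [sint_sub_coe]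
  exact coe_lintegral_sub_le_sint hf.ereal_toENNReal.lintegral_kernel.aemeasurable
    (hB.add hc).aemeasurable

lemma lintegral_lintegral_toENNReal_neg_ne_top (hf : Measurable f) {κ : Kernel X Y}
    (h : ⊥ < sint (μ.bind κ) f) : ∫⁻ x, ∫⁻ y, (-f y).toENNReal ∂κ x ∂μ ≠ ⊤ := by
  rw [← Measure.lintegral_bind (f := fun y => (-f y).toENNReal) κ.aemeasurable
    hf.neg.ereal_toENNReal.aemeasurable]
  exact lintegral_toENNReal_neg_ne_top_of_bot_lt_sint h

lemma lintegral_toENNReal_Ctrans_ne_top {κ₀ : Kernel X Y} [IsMarkovKernel κ₀]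
    (hf : memL μ (μ.bind κ₀) C f)
    (hκ₀ : ∀ᵐ x ∂μ, C x (κ₀ x) = 0) : ∫⁻ x, (Ctrans C f x).toENNReal ∂μ ≠ ⊤ := by
  have hB₀ := lintegral_lintegral_toENNReal_neg_ne_top hf.1 hf.2.1
  refine lintegral_toENNReal_ne_top_of_sint_lt_top hf.2.2
    (ne_top_of_le_ne_top hB₀ (lintegral_mono_ae ?_))
  filter_upwards [hκ₀, ae_lt_top (measurable_lintegral_toENNReal_neg hf.1 κ₀) hB₀] with x hx hBx
  have h_le : sint (κ₀ x) f ≤ Ctrans C f x := by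
    simpa [hx] using sint_sub_le_Ctrans (C := C) (κ₀ x) x
  calc (-Ctrans C f x).toENNReal ≤ (-sint (κ₀ x) f).toENNReal :=
        EReal.toENNReal_le_toENNReal (EReal.neg_le_neg_iff.2 h_le)
    _ = ∫⁻ y, (-f y).toENNReal ∂κ₀ x - ∫⁻ y, (f y).toENNReal ∂κ₀ x := by
        rw [sint_eq_toENNReal, EReal.toENNReal_neg_coe_sub_coe hBx.ne]
    _ ≤ ∫⁻ y, (-f y).toENNReal ∂κ₀ x := tsub_le_self

end RiskMeasure

section Representation

variable {X Y : Type*} [MeasurableSpace X] [MeasurableSpace Y] {μ : Measure X}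
  [IsProbabilityMeasure μ] {C : X → Measure Y → ℝ≥0∞} {f : Y → EReal} {κ₀ : Kernel X Y}
  [IsMarkovKernel κ₀]

-- The competitor is `μ` pushed through `κ` on `s` and through the cost-free `κ₀` off `s`.
lemma le_rho_of_measurableSet (hf : Measurable f) (hκ₀ : ∀ᵐ x ∂μ, C x (κ₀ x) = 0)
    (κ : Kernel X Y) [IsMarkovKernel κ] {s : Set X} (hs : MeasurableSet s) :
    ↑(∫⁻ x in s, ∫⁻ y, (f y).toENNReal ∂κ x ∂μ)
      - ↑(∫⁻ x in s, ∫⁻ y, (-f y).toENNReal ∂κ x + C x (κ x) ∂μ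
        + ∫⁻ x in sᶜ, ∫⁻ y, (-f y).toENNReal ∂κ₀ x ∂μ) ≤ rho μ C f := by
  classical
  have h_cost : ∫⁻ x, C x (Kernel.piecewise hs κ κ₀ x) ∂μ = ∫⁻ x in s, C x (κ x) ∂μ := by
    have h_zero : ∫⁻ x in sᶜ, C x (κ₀ x) ∂μ = 0 :=
      (lintegral_congr_ae (ae_restrict_of_ae hκ₀)).trans lintegral_zero
    simp_rw [Kernel.piecewise_apply, apply_ite (C _)]
    rw [← add_zero (∫⁻ x in s, C x (κ x) ∂μ), ← h_zero]
    exact lintegral_piecewise hs _ _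
  refine le_trans ?_ (sint_bind_sub_le_rho (Kernel.piecewise hs κ κ₀))
  rw [sint_bind hf, EReal.coe_sub_coe_sub_coe, lintegral_lintegral_piecewise,
    lintegral_lintegral_piecewise, h_cost]
  refine EReal.sub_le_sub (EReal.coe_ennreal_le_coe_ennreal_iff.2 le_self_add) (le_of_eq ?_)
  rw [lintegral_add_left (measurable_lintegral_toENNReal_neg hf κ), add_right_comm]

lemma sint_kernel_sub_cost_le_rho (hf : memL μ (μ.bind κ₀) C f)
    (hC : Measurable fun p : X × Measure Y => C p.1 p.2) (hκ₀ : ∀ᵐ x ∂μ, C x (κ₀ x) = 0)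
    (κ : Kernel X Y) [IsMarkovKernel κ] :
    sint μ (fun x => sint (κ x) f - (C x (κ x) : EReal)) ≤ rho μ C f := by
  have h_gain (x : X) : ∫⁻ y, (f y).toENNReal ∂κ x - (∫⁻ y, (-f y).toENNReal ∂κ x + C x (κ x))
      ≤ (Ctrans C f x).toENNReal := by
    rw [← EReal.toENNReal_coe_sub_coe, ← sint_sub_coe]
    exact EReal.toENNReal_le_toENNReal (sint_sub_le_Ctrans _ _)
  simp only [sint_sub_coe]
  exact sint_coe_sub_coe_le_of_forall_measurableSet hf.1.ereal_toENNReal.lintegral_kernel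
    ((measurable_lintegral_toENNReal_neg hf.1 κ).add (hC.comp (measurable_id.prodMk κ.measurable)))
    (lintegral_lintegral_toENNReal_neg_ne_top hf.1 hf.2.1)
    (ne_top_of_le_ne_top (lintegral_toENNReal_Ctrans_ne_top hf hκ₀) (lintegral_mono h_gain))
    fun s hs => le_rho_of_measurableSet hf.1 hκ₀ κ hs

end Representation

theorem kernel_representation_general
    {X Y : Type*} [MeasurableSpace X]
    [MeasurableSpace Y]
    (μ : Measure X) [IsProbabilityMeasure μ]
    (C : X → Measure Y → ℝ≥0∞)
    (hC : Measurable fun p : X × Measure Y => C p.1 p.2)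
    (κ₀ : Kernel X Y) [IsMarkovKernel κ₀]
    (hκ₀ : ∀ᵐ x ∂μ, C x (κ₀ x) = 0)
    (f : Y → EReal) (hf : memL μ (μ.bind κ₀) C f) :
    rho μ C f = ⨆ (κ : Kernel X Y) (_ : IsMarkovKernel κ),
      sint μ (fun x => sint (κ x) f - (C x (κ x) : EReal)) :=
  le_antisymm (rho_le_iSup_sint_kernel_sub_cost hf.1 hC)
    (iSup₂_le fun κ _ => sint_kernel_sub_cost_le_rho hf hC hκ₀ κ)

/-- For every `f ∈ L`, the risk measure `ρ` admits the kernel representation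
`ρ(f) = sup_{κ ∈ ker(X,Y)} ∫_X ( ∫_Y f(y) κ(x,dy) − C(x,κ(x)) ) μ(dx)`,
where the integrand is evaluated with the convention `∞ − ∞ = −∞`. -/
theorem kernel_representation
    {X Y : Type*} [MeasurableSpace X] [StandardBorelSpace X]
    [MeasurableSpace Y] [StandardBorelSpace Y]
    (μ : Measure X) [IsProbabilityMeasure μ]
    (C : X → Measure Y → ℝ≥0∞)
    (hC : Measurable fun p : X × Measure Y => C p.1 p.2)
    (κ₀ : Kernel X Y) [IsMarkovKernel κ₀]
    (hκ₀ : ∀ᵐ x ∂μ, C x (κ₀ x) = 0)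
    (f : Y → EReal) (hf : memL μ (μ.bind κ₀) C f) :
    rho μ C f = ⨆ (κ : Kernel X Y) (_ : IsMarkovKernel κ),
      sint μ (fun x => sint (κ x) f - (C x (κ x) : EReal)) :=
  kernel_representation_general μ C hC κ₀ hκ₀ f hf

end
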